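/- arXiv:2102.12251 — 6 statements merged into one kernel-verified Lean document; each statement's English description precedes it below -/
import Mathlib

section
/- For m, n ∈ ℤ, λ ∈ ℂ*, α ∈ ℂ, the operators L_m on ℂ[t] defined by L_m(f(t)) = λ^m (t + mα) f(t + m) satisfy the Witt algebra relation L_m L_n f - L_n L_m f = (m - n) L_{m+n} f for all f ∈ ℂ[t]. -/
/-! `L_m` is `λ^m` times multiplication by `t + mα` after a Taylor shift by `m`, and the Taylor
shifts compose additively. So `L_m L_n f = λ^(m+n) (t + mα)(t + m + nα) f(t + m + n)`, and the
commutator only sees the difference of the two quadratic prefactors, which is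
`(m - n)(t + (m + n)α)`. -/

open Polynomial

/-- The action `L_m f(t) = λ^m (t + m α) f(t + m)` on `ℂ[t]`. -/
noncomputable def Lw (lam α : ℂ) (m : ℤ) (f : Polynomial ℂ) : Polynomial ℂ :=
  lam ^ m • ((X + C ((m : ℂ) * α)) * f.comp (X + C (m : ℂ)))

lemma Lw_eq_smul_taylor (lam α : ℂ) (m : ℤ) (f : ℂ[X]) :
    Lw lam α m f = lam ^ m • ((X + C ((m : ℂ) * α)) * taylor (m : ℂ) f) :=
  rfl

lemma Lw_Lw {lam : ℂ} (hlam : lam ≠ 0) (α : ℂ) (m n : ℤ) (f : ℂ[X]) :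
    Lw lam α m (Lw lam α n f) = lam ^ (m + n) •
      ((X + C ((m : ℂ) * α)) * (X + C ((m : ℂ) + n * α)) * taylor ((m + n : ℤ) : ℂ) f) := by
  simp only [Lw_eq_smul_taylor, map_smul, map_add, taylor_mul, taylor_X, taylor_C, taylor_taylor,
    mul_smul_comm, smul_smul, ← zpow_add₀ hlam, Int.cast_add]
  congr 1
  ring

theorem stmt0 (lam : ℂ) (hlam : lam ≠ 0) (α : ℂ) (m n : ℤ) (f : Polynomial ℂ) :
    Lw lam α m (Lw lam α n f) - Lw lam α n (Lw lam α m f)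
      = ((m - n : ℤ) : ℂ) • Lw lam α (m + n) f := by
  have prefactor_sub :
      (X + C ((m : ℂ) * α)) * (X + C ((m : ℂ) + n * α))
        - (X + C ((n : ℂ) * α)) * (X + C ((n : ℂ) + m * α))
        = C ((m - n : ℤ) : ℂ) * (X + C (((m + n : ℤ) : ℂ) * α)) := by
    simp only [Int.cast_sub, Int.cast_add, C_add, C_sub, C_mul]
    ring
  rw [Lw_Lw hlam, Lw_Lw hlam, add_comm n m, ← smul_sub, ← sub_mul, prefactor_sub,
    Lw_eq_smul_taylor, smul_comm, smul_eq_C_mul ((m - n : ℤ) : ℂ), mul_assoc]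
end

section
/- The Witt module Ω(λ, α) = ℂ[t] with action L_m(f(t)) = λ^m (t + mα) f(t + m) is a simple module over the Witt algebra if and only if α ≠ 0. -/
/-!
`L_0` is multiplication by `t`, so a submodule invariant under the Witt action is an ideal of
`ℂ[t]`, generated by some `g`, and `g` divides `(t + mα) g(t + m)`. If `g` were not constant,
evaluating at its root `β` with largest real part, where `g(β + m) ≠ 0` for `m > 0`, would give
`β + mα = 0` for `m = 1, 2`, hence `α = 0`. For `α = 0` every `L_m` preserves `t ℂ[t]`.
-/

open Polynomial

namespace Polynomial

theorem mul_mem_of_forall_X_mul_mem {R : Type*} [CommRing R] (N : Submodule R R[X])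
    (hX : ∀ f ∈ N, X * f ∈ N) (p : R[X]) {f : R[X]} (hf : f ∈ N) : p * f ∈ N := by
  induction p using Polynomial.induction_on with
  | C a => rw [← smul_eq_C_mul]; exact N.smul_mem a hf
  | add p q hp hq => rw [add_mul]; exact N.add_mem hp hq
  | monomial n a ih =>
    have e : C a * X ^ (n + 1) * f = X * (C a * X ^ n * f) := by ring
    rw [e]
    exact hX _ ih

def idealOfXMulMem {R : Type*} [CommRing R] (N : Submodule R R[X])
    (hX : ∀ f ∈ N, X * f ∈ N) : Ideal R[X] where
  carrier := N
  add_mem' := N.add_mem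
  zero_mem' := N.zero_mem
  smul_mem' p _ hf := mul_mem_of_forall_X_mul_mem N hX p hf

theorem exists_isRoot_forall_add_not_isRoot {g : ℂ[X]} (hg : g ≠ 0) (hdeg : g.degree ≠ 0) :
    ∃ β, g.IsRoot β ∧ ∀ r : ℝ, 0 < r → ¬ g.IsRoot (β + r) := by
  obtain ⟨z, hz⟩ := Complex.isAlgClosed.exists_root g hdeg
  have hmem : ∀ w, w ∈ g.roots.toFinset ↔ g.IsRoot w := by
    simp [Multiset.mem_toFinset, mem_roots hg]
  obtain ⟨β, hβ, hmax⟩ :=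
    g.roots.toFinset.exists_max_image Complex.re ⟨z, (hmem z).2 hz⟩
  refine ⟨β, (hmem β).1 hβ, fun r hr hroot => ?_⟩
  have := hmax _ ((hmem _).2 hroot)
  simp only [Complex.add_re, Complex.ofReal_re] at this
  linarith

theorem eq_zero_of_forall_dvd_mul_comp {α : ℂ} {g : ℂ[X]} (hg : g ≠ 0) (hdeg : g.degree ≠ 0)
    (hdvd : ∀ m : ℤ, g ∣ (X + C ((m : ℂ) * α)) * g.comp (X + C (m : ℂ))) : α = 0 := by
  obtain ⟨β, hβ, hshift⟩ := exists_isRoot_forall_add_not_isRoot hg hdeg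
  have key : ∀ m : ℕ, 0 < m → β + (m : ℂ) * α = 0 := by
    intro m hm
    obtain ⟨q, hq⟩ := hdvd m
    have heval := congrArg (eval β) hq
    simp only [eval_mul, eval_comp, eval_add, eval_X, eval_C, hβ.eq_zero, zero_mul,
      Int.cast_natCast] at heval
    refine (mul_eq_zero.mp heval).resolve_right fun h => hshift m (by exact_mod_cast hm) ?_
    simpa using h
  linear_combination key 2 two_pos - key 1 one_pos

end Polynomial

section WittModule

variable {lam α : ℂ} {N : Submodule ℂ ℂ[X]}

theorem mul_comp_mem_of_Lw_mem (hlam : lam ≠ 0)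
    (hN : ∀ (m : ℤ) (f : ℂ[X]), f ∈ N → Lw lam α m f ∈ N) (m : ℤ) {f : ℂ[X]} (hf : f ∈ N) :
    (X + C ((m : ℂ) * α)) * f.comp (X + C (m : ℂ)) ∈ N := by
  have h := N.smul_mem (lam ^ m)⁻¹ (hN m f hf)
  rwa [Lw, smul_smul, inv_mul_cancel₀ (zpow_ne_zero m hlam), one_smul] at h

theorem X_mul_mem_of_Lw_mem (hlam : lam ≠ 0)
    (hN : ∀ (m : ℤ) (f : ℂ[X]), f ∈ N → Lw lam α m f ∈ N) (f : ℂ[X]) (hf : f ∈ N) :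
    X * f ∈ N := by
  simpa using mul_comp_mem_of_Lw_mem hlam hN 0 hf

theorem eq_top_of_Lw_mem (hlam : lam ≠ 0) (hα : α ≠ 0)
    (hN : ∀ (m : ℤ) (f : ℂ[X]), f ∈ N → Lw lam α m f ∈ N) (hbot : N ≠ ⊥) : N = ⊤ := by
  set I := idealOfXMulMem N (X_mul_mem_of_Lw_mem hlam hN)
  obtain ⟨g, hI⟩ := (IsPrincipalIdealRing.principal I).principal
  have hmem : ∀ f, f ∈ N ↔ g ∣ f := fun f => by
    rw [← Ideal.mem_span_singleton]
    exact SetLike.ext_iff.mp hI f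
  obtain ⟨f, hfN, hf0⟩ := (Submodule.ne_bot_iff N).mp hbot
  have hg0 : g ≠ 0 := by
    rintro rfl
    exact hf0 (zero_dvd_iff.mp ((hmem f).mp hfN))
  have hgN : g ∈ N := (hmem g).mpr dvd_rfl
  have hunit : IsUnit g := by
    by_contra hgu
    refine hα (eq_zero_of_forall_dvd_mul_comp hg0 (fun hd => hgu ?_) fun m => ?_)
    · exact isUnit_iff_degree_eq_zero.mpr hd
    · exact (hmem _).mp (mul_comp_mem_of_Lw_mem hlam hN m hgN)
  rw [Submodule.eq_top_iff']
  exact fun x => (hmem x).mpr hunit.dvd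

theorem Lw_zero_mem_span_X (lam : ℂ) (m : ℤ) (f : ℂ[X]) :
    Lw lam 0 m f ∈ (Ideal.span {(X : ℂ[X])}).restrictScalars ℂ := by
  rw [Lw, mul_zero, map_zero, add_zero]
  exact Submodule.smul_mem _ _ (Ideal.mem_span_singleton.mpr (dvd_mul_right X _))

end WittModule

/-- `Ω(λ, α)` is a simple Witt module iff `α ≠ 0`. -/
theorem stmt1 (lam : ℂ) (hlam : lam ≠ 0) (α : ℂ) :
    (∀ N : Submodule ℂ (Polynomial ℂ),
        (∀ (m : ℤ) (f : Polynomial ℂ), f ∈ N → Lw lam α m f ∈ N) →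
        N = ⊥ ∨ N = ⊤) ↔ α ≠ 0 := by
  refine ⟨fun h hα => ?_, fun hα N hN => ?_⟩
  · subst hα
    rcases h _ fun m f _ => Lw_zero_mem_span_X lam m f with hbot | htop
    · have hX : (X : ℂ[X]) ∈ (Ideal.span {(X : ℂ[X])}).restrictScalars ℂ := Ideal.subset_span rfl
      exact X_ne_zero ((Submodule.mem_bot ℂ).mp (hbot ▸ hX))
    · have h1 : (1 : ℂ[X]) ∈ (Ideal.span {(X : ℂ[X])}).restrictScalars ℂ := htop ▸ trivial
      exact not_isUnit_X (isUnit_of_dvd_one (Ideal.mem_span_singleton.mp h1))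
  · by_cases hbot : N = ⊥
    · exact Or.inl hbot
    · exact Or.inr (eq_top_of_Lw_mem hlam hα hN hbot)
end

section
/- For λ ∈ ℂ*, the subspace t·ℂ[t] = tΩ(λ,0) of Ω(λ, 0) is a Witt-submodule, there is a Witt-module isomorphism tΩ(λ, 0) ≅ Ω(λ, 1), and tΩ(λ,0) is the unique simple proper submodule of Ω(λ, 0), of codimension 1. -/
open Polynomial

/-- The subspace `t·ℂ[t]` of `Ω(λ,0)`, i.e. the polynomials with zero constant
coefficient. -/
noncomputable def tC : Submodule ℂ (Polynomial ℂ) := LinearMap.ker (lcoeff ℂ 0)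

/- ### auxiliary lemmas -/

/-- the forward difference operator -/
noncomputable def Dl (p : Polynomial ℂ) : Polynomial ℂ := p.comp (X + C 1) - p

lemma dl_ne_zero {p : Polynomial ℂ} (hd : 1 ≤ p.natDegree) : Dl p ≠ 0 := by
  intro h
  have hcomp : p.comp (X + C 1) = p := by
    have := sub_eq_zero.mp h; exact this
  have heval : ∀ x : ℂ, p.eval (x + 1) = p.eval x := by
    intro x
    have := congrArg (eval x) hcomp
    simpa [eval_comp] using this
  have hnat : ∀ n : ℕ, p.eval (n : ℂ) = p.eval 0 := by
    intro n
    induction n with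
    | zero => simp
    | succ k ih => push_cast; rw [heval, ih]
  set q : Polynomial ℂ := p - C (p.eval 0) with hq
  have hq0 : q ≠ 0 := by
    intro h0
    have : p = C (p.eval 0) := by rwa [sub_eq_zero] at h0
    have := congrArg natDegree this
    simp at this
    omega
  have hfin := Polynomial.finite_setOf_isRoot hq0
  have hinf : Set.Infinite { x : ℂ | q.IsRoot x } := by
    apply Set.infinite_of_injective_forall_mem (f := fun n : ℕ => (n : ℂ))
      Nat.cast_injective
    intro n
    simp only [Set.mem_setOf_eq, IsRoot, hq, eval_sub, eval_C, hnat n, sub_self]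
  exact hinf hfin

lemma dl_natDegree_lt {p : Polynomial ℂ} (hd : 1 ≤ p.natDegree) :
    (Dl p).natDegree < p.natDegree := by
  have hp : p ≠ 0 := by intro h; rw [h] at hd; simp at hd
  have hnd : (p.comp (X + C 1)).natDegree = p.natDegree := by
    rw [natDegree_comp, natDegree_X_add_C, mul_one]
  have hcne : p.comp (X + C 1) ≠ 0 := by
    intro h; rw [h] at hnd; simp at hnd; omega
  have hlc : (p.comp (X + C 1)).leadingCoeff = p.leadingCoeff := by
    rw [leadingCoeff_comp (by rw [natDegree_X_add_C]; norm_num),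
      leadingCoeff_X_add_C, one_pow, mul_one]
  have hdeg : (Dl p).degree < p.degree := by
    have := Polynomial.degree_sub_lt (p := p.comp (X + C 1)) (q := p)
      (by rw [degree_eq_natDegree hcne, degree_eq_natDegree hp, hnd]) hcne hlc
    rw [degree_eq_natDegree hcne, hnd, ← degree_eq_natDegree hp] at this
    exact this
  exact natDegree_lt_natDegree (dl_ne_zero hd) hdeg

/-- iterating the difference operator eventually yields a nonzero constant -/
lemma dl_iter_const_aux (n : ℕ) : ∀ p : Polynomial ℂ, p ≠ 0 → p.natDegree ≤ n →
    ∃ (k : ℕ) (c : ℂ), c ≠ 0 ∧ Dl^[k] p = C c := by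
  induction n using Nat.strong_induction_on with
  | _ n ih =>
    intro p hp hn
    rcases Nat.eq_zero_or_pos p.natDegree with h0 | h1
    · obtain ⟨c, hc⟩ := Polynomial.natDegree_eq_zero.mp h0
      exact ⟨0, c, fun h => hp (by rw [← hc, h, map_zero]), by simp [← hc]⟩
    · have hne := dl_ne_zero h1
      have hlt := dl_natDegree_lt h1
      have hnn : 0 < n := lt_of_lt_of_le h1 hn
      obtain ⟨k, c, hc, hk⟩ := ih (n - 1) (by omega) (Dl p) hne (by omega)
      exact ⟨k + 1, c, hc, by rw [Function.iterate_succ_apply]; exact hk⟩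

lemma dl_iter_const (p : Polynomial ℂ) (hp : p ≠ 0) :
    ∃ (k : ℕ) (c : ℂ), c ≠ 0 ∧ Dl^[k] p = C c :=
  dl_iter_const_aux p.natDegree p hp le_rfl

/-- the intertwining identity -/
lemma intertwine (lam : ℂ) (m : ℤ) (f : Polynomial ℂ) :
    X * Lw lam 1 m f = Lw lam 0 m (X * f) := by
  unfold Lw
  rw [mul_smul_comm]
  congr 1
  simp only [mul_comp, X_comp, C_comp, mul_one, mul_zero, map_zero, add_zero]

/-- simplicity of `Ω(λ, 1)` -/
lemma omega_one_simple (lam : ℂ) (hlam : lam ≠ 0) (M : Submodule ℂ (Polynomial ℂ))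
    (hM : ∀ (m : ℤ) (f : Polynomial ℂ), f ∈ M → Lw lam 1 m f ∈ M)
    (hne : M ≠ ⊥) : M = ⊤ := by
  -- raw action membership
  have hact : ∀ (m : ℤ) (g : Polynomial ℂ), g ∈ M →
      (X + C (m : ℂ)) * g.comp (X + C (m : ℂ)) ∈ M := by
    intro m g hg
    have h1 := hM m g hg
    have h2 := M.smul_mem ((lam ^ m)⁻¹) h1
    rw [Lw, smul_smul, inv_mul_cancel₀ (zpow_ne_zero m hlam), one_smul,
      mul_one] at h2
    exact h2
  obtain ⟨g, hgM, hg0⟩ := Submodule.exists_mem_ne_zero_of_ne_bot hne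
  -- all integer shifts of iterated differences of X*g are in M
  have hshift : ∀ (k : ℕ) (m : ℤ), (Dl^[k] (X * g)).comp (X + C (m : ℂ)) ∈ M := by
    intro k
    induction k with
    | zero =>
      intro m
      simpa [mul_comp] using hact m g hgM
    | succ k ih =>
      intro m
      rw [Function.iterate_succ_apply', Dl, sub_comp, comp_assoc]
      have hcc : ((X + C 1 : Polynomial ℂ)).comp (X + C (m : ℂ)) = X + C ((m + 1 : ℤ) : ℂ) := by
        rw [add_comp, X_comp, C_comp]
        push_cast
        rw [C_add]
        ring
      rw [hcc]
      exact sub_mem (ih (m + 1)) (ih m)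
  -- hence some nonzero constant is in M, so 1 ∈ M
  obtain ⟨k, c, hc, hk⟩ := dl_iter_const (X * g) (by
    intro h
    rcases mul_eq_zero.mp h with h | h
    · exact X_ne_zero h
    · exact hg0 h)
  have hCc : C c ∈ M := by
    have := hshift k 0
    rwa [hk, Int.cast_zero, map_zero, add_zero, C_comp] at this
  have hone : (1 : Polynomial ℂ) ∈ M := by
    have := M.smul_mem c⁻¹ hCc
    rwa [smul_C, smul_eq_mul, inv_mul_cancel₀ hc, map_one] at this
  -- all powers of X are in M
  have hpow : ∀ n : ℕ, (X : Polynomial ℂ) ^ n ∈ M := by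
    intro n
    induction n with
    | zero => simpa using hone
    | succ n ih =>
      have := hact 0 (X ^ n) ih
      simpa [pow_succ, mul_comm] using this
  -- conclude M = ⊤
  have hall : ∀ p : Polynomial ℂ, p ∈ M := by
    intro p
    induction p using Polynomial.induction_on' with
    | add f g hf hg => exact add_mem hf hg
    | monomial n a =>
      have : (monomial n a : Polynomial ℂ) = a • X ^ n := by
        rw [smul_eq_C_mul, C_mul_X_pow_eq_monomial]
      rw [this]
      exact M.smul_mem a (hpow n)
  rw [eq_top_iff]
  exact fun p _ => hall p

/-- `t·ℂ[t]` is a Witt submodule of `Ω(λ, 0)`; multiplication by `t` is an injective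
intertwiner `Ω(λ,1) → Ω(λ,0)` with image `t·ℂ[t]` (so `tΩ(λ,0) ≅ Ω(λ,1)` as Witt
modules); `tΩ(λ,0)` is simple; and it is the unique simple proper submodule of
`Ω(λ,0)`, of codimension 1. -/
theorem stmt2 (lam : ℂ) (hlam : lam ≠ 0) :
    (∀ (m : ℤ) (f : Polynomial ℂ), f ∈ tC → Lw lam 0 m f ∈ tC) ∧
    (∀ (m : ℤ) (f : Polynomial ℂ), X * Lw lam 1 m f = Lw lam 0 m (X * f)) ∧
    (Function.Injective fun f : Polynomial ℂ => X * f) ∧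
    (∀ f : Polynomial ℂ, f ∈ tC ↔ ∃ g : Polynomial ℂ, f = X * g) ∧
    (∀ N : Submodule ℂ (Polynomial ℂ),
        (∀ (m : ℤ) (f : Polynomial ℂ), f ∈ N → Lw lam 0 m f ∈ N) →
        N ≤ tC → N = ⊥ ∨ N = tC) ∧
    tC ≠ ⊤ ∧
    (∀ N : Submodule ℂ (Polynomial ℂ),
        (∀ (m : ℤ) (f : Polynomial ℂ), f ∈ N → Lw lam 0 m f ∈ N) →
        (∀ N' : Submodule ℂ (Polynomial ℂ),
            (∀ (m : ℤ) (f : Polynomial ℂ), f ∈ N' → Lw lam 0 m f ∈ N') →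
            N' ≤ N → N' = ⊥ ∨ N' = N) →
        N ≠ ⊥ → N ≠ ⊤ → N = tC) ∧
    Module.finrank ℂ (Polynomial ℂ ⧸ tC) = 1 := by
  -- basic membership criterion
  have hmemtC : ∀ f : Polynomial ℂ, f ∈ tC ↔ f.coeff 0 = 0 := by
    intro f; rfl
  -- (1) : in fact Lw lam 0 m f ∈ tC always
  have h1 : ∀ (m : ℤ) (f : Polynomial ℂ), Lw lam 0 m f ∈ tC := by
    intro m f
    rw [hmemtC, Lw]
    simp [coeff_smul, mul_comm]
  -- (4)
  have h4 : ∀ f : Polynomial ℂ, f ∈ tC ↔ ∃ g : Polynomial ℂ, f = X * g := by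
    intro f
    rw [hmemtC]
    constructor
    · intro h
      obtain ⟨g, hg⟩ := X_dvd_iff.mpr h
      exact ⟨g, hg⟩
    · rintro ⟨g, rfl⟩
      simp
  -- (3)
  have h3 : Function.Injective fun f : Polynomial ℂ => X * f :=
    fun a b h => mul_left_cancel₀ X_ne_zero h
  -- (5)
  have h5 : ∀ N : Submodule ℂ (Polynomial ℂ),
      (∀ (m : ℤ) (f : Polynomial ℂ), f ∈ N → Lw lam 0 m f ∈ N) →
      N ≤ tC → N = ⊥ ∨ N = tC := by
    intro N hNcl hNle
    rcases eq_or_ne N ⊥ with hb | hb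
    · exact Or.inl hb
    right
    set M : Submodule ℂ (Polynomial ℂ) := N.comap (LinearMap.mulLeft ℂ X) with hMdef
    have hMmem : ∀ g : Polynomial ℂ, g ∈ M ↔ X * g ∈ N := fun g => Iff.rfl
    have hMcl : ∀ (m : ℤ) (g : Polynomial ℂ), g ∈ M → Lw lam 1 m g ∈ M := by
      intro m g hg
      rw [hMmem, intertwine]
      exact hNcl m _ ((hMmem g).mp hg)
    have hMne : M ≠ ⊥ := by
      obtain ⟨f, hfN, hf0⟩ := Submodule.exists_mem_ne_zero_of_ne_bot hb
      obtain ⟨g, hg⟩ := (h4 f).mp (hNle hfN)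
      intro hMb
      have hgM : g ∈ M := by rw [hMmem, ← hg]; exact hfN
      rw [hMb, Submodule.mem_bot] at hgM
      exact hf0 (by rw [hg, hgM, mul_zero])
    have hMtop := omega_one_simple lam hlam M hMcl hMne
    apply le_antisymm hNle
    intro f hf
    obtain ⟨g, rfl⟩ := (h4 f).mp hf
    have : g ∈ M := hMtop ▸ Submodule.mem_top
    exact (hMmem g).mp this
  -- (6)
  have h6 : tC ≠ ⊤ := by
    intro h
    have : (1 : Polynomial ℂ) ∈ tC := h ▸ Submodule.mem_top
    rw [hmemtC] at this
    simp at this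
  -- (7)
  have h7 : ∀ N : Submodule ℂ (Polynomial ℂ),
      (∀ (m : ℤ) (f : Polynomial ℂ), f ∈ N → Lw lam 0 m f ∈ N) →
      (∀ N' : Submodule ℂ (Polynomial ℂ),
          (∀ (m : ℤ) (f : Polynomial ℂ), f ∈ N' → Lw lam 0 m f ∈ N') →
          N' ≤ N → N' = ⊥ ∨ N' = N) →
      N ≠ ⊥ → N ≠ ⊤ → N = tC := by
    intro N hNcl _ hNb hNt
    have hcap := h5 (N ⊓ tC) (fun m f hf => ⟨hNcl m f hf.1, h1 m f⟩) inf_le_right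
    rcases hcap with hcap | hcap
    · -- N ⊓ tC = ⊥ : impossible since X * f ∈ N ⊓ tC for f ∈ N
      exfalso
      obtain ⟨f, hfN, hf0⟩ := Submodule.exists_mem_ne_zero_of_ne_bot hNb
      have hXf : X * f ∈ N := by
        have := hNcl 0 f hfN
        rw [Lw] at this
        simpa using this
      have : X * f ∈ N ⊓ tC := ⟨hXf, (h4 (X * f)).mpr ⟨f, rfl⟩⟩
      rw [hcap, Submodule.mem_bot] at this
      exact hf0 (mul_left_cancel₀ X_ne_zero (by rw [this, mul_zero]))
    · -- N ⊓ tC = tC : so tC ≤ N; then N = tC else N = ⊤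
      have htCle : tC ≤ N := by rw [← hcap]; exact inf_le_left
      by_contra hNtC
      apply hNt
      have : ∃ f ∈ N, f.coeff 0 ≠ 0 := by
        by_contra hall
        push_neg at hall
        exact hNtC (le_antisymm (fun f hf => (hmemtC f).mpr (hall f hf)) htCle)
      obtain ⟨f, hfN, hf0⟩ := this
      rw [eq_top_iff]
      intro p _
      have : p = (p - C (p.coeff 0 / f.coeff 0) * f) + C (p.coeff 0 / f.coeff 0) * f := by
        ring
      rw [this]
      apply N.add_mem
      · apply htCle
        rw [hmemtC]
        simp only [coeff_sub, coeff_C_mul]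
        field_simp
        ring
      · rw [← smul_eq_C_mul]
        exact N.smul_mem _ hfN
  -- (8)
  have h8 : Module.finrank ℂ (Polynomial ℂ ⧸ tC) = 1 := by
    have hsurj : Function.Surjective (lcoeff ℂ 0) := by
      intro c
      exact ⟨C c, coeff_C_zero⟩
    have e : (Polynomial ℂ ⧸ tC) ≃ₗ[ℂ] ℂ :=
      (LinearMap.quotKerEquivOfSurjective _ hsurj)
    rw [e.finrank_eq, Module.finrank_self]
  exact ⟨fun m f _ => h1 m f, intertwine lam, h3, h4, h5, h6, h7, h8⟩
end

section
/- For p, q ∈ (1/2)ℤ with p + q ∈ ℤ, the operators G_p: ℂ[x] → ℂ[y] and G_p: ℂ[y] → ℂ[x] defined by G_p f(x) = t^{2p} λ^p f(y + p) and G_p g(y) = (−t)^{2p} λ^p (x + 2pα) g(x + p) satisfy G_p G_q f + G_q G_p f = (−1)^{2p} · 2 λ^{p+q} (x + (p+q)α) f(x + p + q) for all f ∈ ℂ[x], i.e. the anticommutator [G_p, G_q] acts as (−1)^{2p} 2 L_{p+q} on the even part. -/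
open Polynomial

/- Half-integers `p ∈ (1/2)ℤ` are encoded by their doubles `a = 2p ∈ ℤ`; `λ^p = ν^a`
for a fixed square root `ν` of `λ`, `t^{2p} = t^a`, `(−t)^{2p} = (−t)^a`. -/

/-- `G_p : ℂ[x] → ℂ[y]`, `G_p f(x) = t^{2p} λ^p f(y + p)`. -/
noncomputable def Geo (t nu : ℂ) (a : ℤ) (f : Polynomial ℂ) : Polynomial ℂ :=
  (t ^ a * nu ^ a) • f.comp (X + C ((a : ℂ) / 2))

/-- `G_p : ℂ[y] → ℂ[x]`, `G_p g(y) = (−t)^{2p} λ^p (x + 2pα) g(x + p)`. -/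
noncomputable def Goe (t nu α : ℂ) (a : ℤ) (g : Polynomial ℂ) : Polynomial ℂ :=
  ((-t) ^ a * nu ^ a) • ((X + C ((a : ℂ) * α)) * g.comp (X + C ((a : ℂ) / 2)))

/- Both compositions `G_p G_q f` and `G_q G_p f` shift `f` by `p + q` and carry the same scalar
`(−1)^{2p} λ^{p+q}`: since `2p + 2q` is even, `t^{2p+2q} = 1` and `(−1)^{2p} = (−1)^{2q}`.
Their linear factors `x + 2pα` and `x + 2qα` add up to `2 (x + (p + q)α)`. -/

theorem neg_one_zpow_eq_of_even_add {K : Type*} [DivisionRing K] {a b : ℤ}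
    (hab : Even (a + b)) : (-1 : K) ^ b = (-1 : K) ^ a := by
  have hba : Even (b - a) := by simpa [two_mul] using hab.sub (even_two_mul a)
  rw [← Int.cast_negOnePow, ← Int.cast_negOnePow, (Int.negOnePow_eq_iff b a).2 hba]

theorem neg_zpow_mul_zpow_of_even_add {K : Type*} [DivisionRing K] {t : K}
    (ht : t = 1 ∨ t = -1) {a b : ℤ} (hab : Even (a + b)) :
    (-t) ^ a * t ^ b = (-1) ^ a := by
  rcases ht with rfl | rfl
  · simp
  · simp [neg_one_zpow_eq_of_even_add hab]

theorem Goe_Geo (t nu α : ℂ) (a b : ℤ) (f : ℂ[X]) :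
    Goe t nu α a (Geo t nu b f) = ((-t) ^ a * t ^ b * (nu ^ a * nu ^ b)) •
      ((X + C ((a : ℂ) * α)) * f.comp (X + C (((a + b : ℤ) : ℂ) / 2))) := by
  rw [Goe, Geo, smul_comp, mul_smul_comm, smul_smul, ← taylor_apply, ← taylor_apply,
    ← taylor_apply, taylor_taylor, Int.cast_add, add_div, add_comm]
  congr 1
  ring

/-- For `p + q ∈ ℤ`, the anticommutator `[G_p, G_q]` acts on the even part as
`(−1)^{2p} 2 L_{p+q}`. -/
theorem stmt4 (t nu α : ℂ) (ht : t = 1 ∨ t = -1) (hnu : nu ≠ 0)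
    (a b : ℤ) (hab : Even (a + b)) (f : Polynomial ℂ) :
    Goe t nu α a (Geo t nu b f) + Goe t nu α b (Geo t nu a f)
      = ((-1 : ℂ) ^ a * 2 * nu ^ (a + b)) •
          ((X + C (((a + b : ℤ) : ℂ) / 2 * α)) *
            f.comp (X + C (((a + b : ℤ) : ℂ) / 2))) := by
  have hba : Even (b + a) := by rwa [add_comm]
  have hfactors : X + C ((a : ℂ) * α) + (X + C ((b : ℂ) * α))
      = (2 : ℂ) • (X + C (((a + b : ℤ) : ℂ) / 2 * α)) := by
    rw [smul_add, two_smul, smul_C, smul_eq_mul, ← add_add_add_comm, ← C_add]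
    congr 2
    push_cast
    ring
  rw [Goe_Geo, Goe_Geo, add_comm b a, neg_zpow_mul_zpow_of_even_add ht hab,
    neg_zpow_mul_zpow_of_even_add ht hba, neg_one_zpow_eq_of_even_add hab, mul_comm (nu ^ b),
    ← zpow_add₀ hnu, ← smul_add, ← add_mul, hfactors, smul_mul_assoc, smul_smul]
  congr 1
  ring
end

section
/- Suppose V is a 𝒯-module free of rank 1 over U(𝔥) with even generator 1, on which the L_m act by L_m(f(∂²)1) = λ^m(∂² + mα)f(∂² + m)1. Write G_m 1 = a_m ∂·1 with a_m ∈ ℂ for m ∈ ℤ. Then the relation G_m²·1 = L_{2m}·1 together with [G_0, G_m]1 = 2L_m 1 forces a_m = λ^m for all m ∈ ℤ. -/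
open Polynomial

/-!
Over a domain, if `f` had positive degree the left-hand side would have degree `2 deg f + 1 ≥ 3`,
while the right-hand side has degree at most one; so `f = C e` is constant. Comparing the
coefficients of `X` then gives `2ae - e² = a²`, i.e. `(e - a)² = 0`.
-/

namespace Polynomial

variable {R : Type*} [CommRing R] [IsDomain R]

theorem natDegree_eq_zero_of_comp_mul_sub_X_mul_eq {f p q : R[X]} {b : R}
    (hp : p.natDegree ≤ 1) (hq : q.natDegree ≤ 1) (h : f.comp (X + C b) * (p - X * f) = q) :
    f.natDegree = 0 := by
  by_contra hf
  have hf0 : f ≠ 0 := by rintro rfl; exact hf natDegree_zero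
  have hcomp : (f.comp (X + C b)).natDegree = f.natDegree := by
    rw [natDegree_comp, natDegree_X_add_C, mul_one]
  have hXf : (X * f).natDegree = f.natDegree + 1 := by
    rw [natDegree_mul X_ne_zero hf0, natDegree_X, add_comm]
  have hsub : (p - X * f).natDegree = f.natDegree + 1 := by
    rw [natDegree_sub_eq_right_of_natDegree_lt (by omega), hXf]
  have hcomp0 : f.comp (X + C b) ≠ 0 := by
    intro h0; rw [h0, natDegree_zero] at hcomp; omega
  have hsub0 : p - X * f ≠ 0 := by
    intro h0; rw [h0, natDegree_zero] at hsub; omega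
  have hdeg := natDegree_mul hcomp0 hsub0
  rw [h, hcomp, hsub] at hdeg
  omega

theorem eq_of_C_mul_smul_sub_X_mul_C_eq {a c d e : R}
    (h : C e * ((2 * a) • (X + C c) - X * C e) = a ^ 2 • (X + C d)) : e = a := by
  have hX := congrArg (coeff · 1) h
  simp only [coeff_C_mul, coeff_sub, coeff_smul, coeff_add, coeff_X_one, coeff_C, coeff_X_mul,
    smul_eq_mul, one_ne_zero, ↓reduceIte, add_zero, mul_one] at hX
  have hsq : (e - a) ^ 2 = 0 := by linear_combination -hX
  exact sub_eq_zero.mp (pow_eq_zero_iff two_ne_zero |>.mp hsq)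

theorem eq_C_of_comp_mul_smul_sub_X_mul_eq {a b c d : R} {f : R[X]}
    (h : f.comp (X + C b) * ((2 * a) • (X + C c) - X * f) = a ^ 2 • (X + C d)) :
    f = C a := by
  have hdeg := natDegree_eq_zero_of_comp_mul_sub_X_mul_eq
    ((natDegree_smul_le _ _).trans (natDegree_X_add_C c).le)
    ((natDegree_smul_le _ _).trans (natDegree_X_add_C d).le) h
  obtain ⟨e, rfl⟩ := natDegree_eq_zero.mp hdeg
  rw [C_comp] at h
  rw [eq_of_C_mul_smul_sub_X_mul_C_eq h]

end Polynomial

theorem stmt14_general (lam : ℂ) (α : ℂ) (m : ℤ) (f : Polynomial ℂ)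
    (h : f.comp (X + C (m : ℂ)) *
          ((2 * lam ^ m) • (X + C ((m : ℂ) * α)) - X * f)
        = lam ^ (2 * m) • (X + C (2 * (m : ℂ) * α))) :
    f = C (lam ^ m) := by
  rw [zpow_mul', zpow_two, ← sq] at h
  exact eq_C_of_comp_mul_smul_sub_X_mul_eq h

theorem stmt14 (lam : ℂ) (hlam : lam ≠ 0) (α : ℂ) (m : ℤ) (f : Polynomial ℂ)
    (h : f.comp (X + C (m : ℂ)) *
          ((2 * lam ^ m) • (X + C ((m : ℂ) * α)) - X * f)
        = lam ^ (2 * m) • (X + C (2 * (m : ℂ) * α))) :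
    f = C (lam ^ m) :=
  stmt14_general lam α m f h
end

section
/- Every 𝒯-module W that is free of rank 2 as a U(ℂL_0)-module with two homogeneous basis elements must have the two basis elements of opposite parity; if they had the same parity then G_{±r}v = G_{±r}w = 0 for all r ∈ 1/2+ℤ, forcing L_0 v = L_0 w = 0 via L_0 = −(1/2)[G_r, G_{−r}], contradicting freeness. -/
/-!
If `v` and `w` lie in the same graded component `S`, then `S`, being stable under `ℓ`, contains
all of `ℂ[ℓ] v + ℂ[ℓ] w = W`, so the other component is `0`. The odd operators map `S` into it
and hence kill `v`, and the anticommutator relation `G₁ G₋₁ + G₋₁ G₁ = -2 ℓ` gives `ℓ v = 0`.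
But then `(X, 0)` and `(0, 0)` have the same image, contradicting freeness.
-/

open Polynomial

section FreeOverPolynomials

variable {R W : Type*} [CommRing R] [AddCommGroup W] [Module R W] (ℓ : Module.End R W) (v w : W)

lemma apply_ne_zero_of_injective_aeval_add [Nontrivial R]
    (hinj : Function.Injective (fun q : R[X] × R[X] => aeval ℓ q.1 v + aeval ℓ q.2 w)) :
    ℓ v ≠ 0 := by
  intro hℓv
  have h : ((X : R[X]), (0 : R[X])) = (0, 0) := hinj (by simp [hℓv])
  exact X_ne_zero (congrArg Prod.fst h)

lemma Submodule.eq_top_of_surjective_aeval_add {S : Submodule R W} (hℓ : S ≤ S.comap ℓ)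
    (hv : v ∈ S) (hw : w ∈ S)
    (hsurj : Function.Surjective (fun q : R[X] × R[X] => aeval ℓ q.1 v + aeval ℓ q.2 w)) :
    S = ⊤ := by
  refine eq_top_iff.mpr fun x _ => ?_
  obtain ⟨q, rfl⟩ := hsurj x
  exact S.add_mem (aeval_apply_smul_mem_of_le_comap hv q.1 ℓ hℓ)
    (aeval_apply_smul_mem_of_le_comap hw q.2 ℓ hℓ)

end FreeOverPolynomials

lemma Module.End.apply_eq_zero_of_anticomm_eq_smul {K W : Type*} [Field K] [AddCommGroup W]
    [Module K W] {f g ℓ : Module.End K W} {c : K} (hc : c ≠ 0) (hfg : f * g + g * f = c • ℓ)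
    {x : W} (hf : f x = 0) (hg : g x = 0) : ℓ x = 0 := by
  have h := congrArg (fun e : Module.End K W => e x) hfg
  simp only [LinearMap.add_apply, Module.End.mul_apply, LinearMap.smul_apply, hf, hg,
    map_zero, add_zero] at h
  exact (smul_eq_zero.mp h.symm).resolve_left hc

lemma not_mem_and_mem_of_odd_maps_to_disjoint {K W : Type*} [Field K] [AddCommGroup W]
    [Module K W] {S T : Submodule K W} (hST : Disjoint S T) {ℓ f g : Module.End K W}
    (hℓ : S ≤ S.comap ℓ) (hf : S ≤ T.comap f) (hg : S ≤ T.comap g) {c : K} (hc : c ≠ 0)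
    (hfg : f * g + g * f = c • ℓ) {v w : W}
    (hfree : Function.Bijective (fun q : K[X] × K[X] => aeval ℓ q.1 v + aeval ℓ q.2 w)) :
    ¬ (v ∈ S ∧ w ∈ S) := by
  rintro ⟨hv, hw⟩
  have hT : T = ⊥ := by
    rw [← top_disjoint, ← S.eq_top_of_surjective_aeval_add ℓ v w hℓ hv hw hfree.2]
    exact hST
  have hfv : f v = 0 := by simpa [hT] using hf hv
  have hgv : g v = 0 := by simpa [hT] using hg hv
  exact apply_ne_zero_of_injective_aeval_add ℓ v w hfree.1
    (Module.End.apply_eq_zero_of_anticomm_eq_smul hc hfg hfv hgv)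

theorem stmt16_general {W : Type*} [AddCommGroup W] [Module ℂ W]
    (W0 W1 : Submodule ℂ W) (hdisj : W0 ⊓ W1 = ⊥)
    (ℓ : Module.End ℂ W) (G : ℤ → Module.End ℂ W)
    (hl0 : ∀ v ∈ W0, ℓ v ∈ W0) (hl1 : ∀ v ∈ W1, ℓ v ∈ W1)
    (hG01 : ∀ a : ℤ, Odd a → ∀ v ∈ W0, G a v ∈ W1)
    (hG10 : ∀ a : ℤ, Odd a → ∀ v ∈ W1, G a v ∈ W0)
    (hGG : ∀ a : ℤ, Odd a → G a * G (-a) + G (-a) * G a = (-2 : ℂ) • ℓ)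
    (v w : W) (hv : v ∈ W0 ∨ v ∈ W1) (hw : w ∈ W0 ∨ w ∈ W1)
    (hfree : Function.Bijective (fun q : Polynomial ℂ × Polynomial ℂ =>
        (Polynomial.aeval ℓ q.1) v + (Polynomial.aeval ℓ q.2) w)) :
    (v ∈ W0 ∧ w ∈ W1) ∨ (v ∈ W1 ∧ w ∈ W0) := by
  have hdisj' : Disjoint W0 W1 := disjoint_iff.mpr hdisj
  have h2 : (-2 : ℂ) ≠ 0 := by norm_num
  have hodd : Odd (-1 : ℤ) := by decide
  have not_both_even := not_mem_and_mem_of_odd_maps_to_disjoint hdisj' hl0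
    (hG01 1 odd_one) (hG01 (-1) hodd) h2 (hGG 1 odd_one) hfree
  have not_both_odd := not_mem_and_mem_of_odd_maps_to_disjoint hdisj'.symm hl1
    (hG10 1 odd_one) (hG10 (-1) hodd) h2 (hGG 1 odd_one) hfree
  rcases hv with hv | hv <;> rcases hw with hw | hw
  · exact (not_both_even ⟨hv, hw⟩).elim
  · exact .inl ⟨hv, hw⟩
  · exact .inr ⟨hv, hw⟩
  · exact (not_both_odd ⟨hv, hw⟩).elim

theorem stmt16 {W : Type*} [AddCommGroup W] [Module ℂ W]
    (W0 W1 : Submodule ℂ W) (hdisj : W0 ⊓ W1 = ⊥) (hsup : W0 ⊔ W1 = ⊤)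
    (ℓ : Module.End ℂ W) (G : ℤ → Module.End ℂ W)
    (hl0 : ∀ v ∈ W0, ℓ v ∈ W0) (hl1 : ∀ v ∈ W1, ℓ v ∈ W1)
    (hG01 : ∀ a : ℤ, Odd a → ∀ v ∈ W0, G a v ∈ W1)
    (hG10 : ∀ a : ℤ, Odd a → ∀ v ∈ W1, G a v ∈ W0)
    (hGG : ∀ a : ℤ, Odd a → G a * G (-a) + G (-a) * G a = (-2 : ℂ) • ℓ)
    (v w : W) (hv : v ∈ W0 ∨ v ∈ W1) (hw : w ∈ W0 ∨ w ∈ W1)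
    (hfree : Function.Bijective (fun q : Polynomial ℂ × Polynomial ℂ =>
        (Polynomial.aeval ℓ q.1) v + (Polynomial.aeval ℓ q.2) w)) :
    (v ∈ W0 ∧ w ∈ W1) ∨ (v ∈ W1 ∧ w ∈ W0) :=
  stmt16_general W0 W1 hdisj ℓ G hl0 hl1 hG01 hG10 hGG v w hv hw hfree
end
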